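/- Let M be a matching in the ranked reservation graph G, let s be a student not covered by M, let P be an augmenting path with respect to M that starts at s and ends at a seat v of rank k not covered by M, and let s' be a student covered by M, not lying on P, who is matched in M to a seat v' of rank k. Then M* := ((M \ P) ∪ (P \ M)) \ {(s', v')} is a matching in G with |M*| = |M|, ρ(M*) = ρ(M), and the set of students covered by M* equals (S_M ∪ {s}) \ {s'}. In particular, if M is rank-maximal of size at most q, so is M*. -/

import Mathlib

open Classical

/-- An instance `I = (S, q, ≻, T, τ, η)`: a finite set of students with a strict
total order (priority, modeled by a linear order where `s' < s` means `s ≻ s'`),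
a positive capacity `q`, a finite set of types `T`, a type assignment `τ`, and
ranked quotas `η t j` for ranks `j ∈ {1,…,r}`. -/
structure Inst where
  S : Type
  T : Type
  [fS : Fintype S]
  [dS : DecidableEq S]
  [lS : LinearOrder S]
  [fT : Fintype T]
  [dT : DecidableEq T]
  q : ℕ
  qpos : 0 < q
  r : ℕ
  τ : S → Finset T
  η : T → ℕ → ℕ

attribute [instance] Inst.fS Inst.dS Inst.lS Inst.fT Inst.dT

/-- `s ≻ s'` : student `s` has strictly higher priority than `s'`. -/
def Inst.prio (I : Inst) (s s' : I.S) : Prop := s' < s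

/-- A (potential) reserved seat: a type (`none` = the general type `t₀`),
a rank, and an index. -/
abbrev SeatT (I : Inst) := Option I.T × ℕ × ℕ

/-- The rank of a seat. -/
def seatRank (I : Inst) (v : SeatT I) : ℕ := v.2.1

/-- The type of a seat (`none` = general type `t₀`). -/
def seatType (I : Inst) (v : SeatT I) : Option I.T := v.1

/-- Seats actually present in the ranked reservation graph: for each type `t`, rank
`1 ≤ j ≤ r` and index `i < η t j` a seat, and `q` general seats of rank `r`. -/
def SeatValid (I : Inst) (v : SeatT I) : Prop :=
  match v.1 with
  | some t => 1 ≤ v.2.1 ∧ v.2.1 ≤ I.r ∧ v.2.2 < I.η t v.2.1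
  | none => v.2.1 = I.r ∧ v.2.2 < I.q

/-- There is an edge between student `s` and a seat of type `t` iff `t ∈ τ s` or
`t` is the general type `t₀`. -/
def EdgeOK (I : Inst) (s : I.S) (v : SeatT I) : Prop :=
  match v.1 with
  | some t => t ∈ I.τ s
  | none => True

/-- A matching in the ranked reservation graph: a set of edges of `G` in which
every student and every seat appears at most once. -/
def IsMatching (I : Inst) (M : Finset (I.S × SeatT I)) : Prop :=
  (∀ e ∈ M, SeatValid I e.2 ∧ EdgeOK I e.1 e.2) ∧
  (∀ e ∈ M, ∀ e' ∈ M, e.1 = e'.1 → e = e') ∧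
  (∀ e ∈ M, ∀ e' ∈ M, e.2 = e'.2 → e = e')

/-- `S_M`: the set of students covered by the matching `M`. -/
def covered (I : Inst) (M : Finset (I.S × SeatT I)) : Finset I.S := M.image Prod.fst

/-- `x_i`: the number of edges of rank `i` in `M` (the `i`-th entry of the
signature `ρ(M)`). -/
def sig (I : Inst) (M : Finset (I.S × SeatT I)) (i : ℕ) : ℕ :=
  (M.filter (fun e => seatRank I e.2 = i)).card

/-- `ρ(M) <lex ρ(M')` : the signature of `M'` is lexicographically strictly
better than that of `M`. -/
def SigLT (I : Inst) (M M' : Finset (I.S × SeatT I)) : Prop :=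
  ∃ k, 1 ≤ k ∧ k ≤ I.r ∧ (∀ i, 1 ≤ i → i < k → sig I M i = sig I M' i) ∧
    sig I M k < sig I M' k

/-- A matching of size at most `q` is rank-maximal if its signature is
lexicographically ≥ that of every matching of size at most `q`. -/
def RankMaximal (I : Inst) (M : Finset (I.S × SeatT I)) : Prop :=
  IsMatching I M ∧ M.card ≤ I.q ∧
    ∀ M', IsMatching I M' → M'.card ≤ I.q → ¬ SigLT I M M'

/-- `U`: the set of groups (type combinations actually occurring among students). -/
def groups (I : Inst) : Finset (Finset I.T) := Finset.univ.image I.τ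

/-- `S_u`: the set of students of group `u`. -/
def Su (I : Inst) (u : Finset I.T) : Finset I.S :=
  Finset.univ.filter (fun s => I.τ s = u)

/-- `|M_u|`: the number of students of group `u` covered by `M`. -/
def Mu (I : Inst) (M : Finset (I.S × SeatT I)) (u : Finset I.T) : ℕ :=
  ((covered I M).filter (fun s => I.τ s = u)).card

/-- `min_{u ∈ U} |M_u| / |S_u|` (as `WithTop ℚ`; it is `⊤` iff `U = ∅`). -/
noncomputable def minRatio (I : Inst) (M : Finset (I.S × SeatT I)) : WithTop ℚ :=
  ((groups I).image (fun u => ((Mu I M u : ℚ) / ((Su I u).card : ℚ)))).min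

/-- `M` attains balanced representation: `M` is rank-maximal of size at most `q`
and maximizes `min_{u∈U} |M_u|/|S_u|` over all such matchings. -/
def BalancedRep (I : Inst) (M : Finset (I.S × SeatT I)) : Prop :=
  RankMaximal I M ∧ ∀ M', RankMaximal I M' → minRatio I M' ≤ minRatio I M

/-- The greedy choice function `Ch*`: process the students in decreasing order of
priority, adding the current student `s` whenever some matching of size at most `q`
that is rank-maximal and attains balanced representation covers `S* ∪ {s}`. -/
noncomputable def ChStar (I : Inst) : Finset I.S :=
  ((Finset.sort (Finset.univ : Finset I.S) (· ≤ ·)).reverse).foldl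
    (fun A s =>
      if ∃ M, BalancedRep I M ∧ insert s A ⊆ covered I M then insert s A else A) ∅

/-- Non-wastefulness of a chosen set: `|S*| = min (|S|, q)`. -/
def NonWasteful (I : Inst) (A : Finset I.S) : Prop :=
  A.card = min (Fintype.card I.S) I.q

/-- Maximal diversity of a chosen set: some rank-maximal matching of size at most
`q` covers only students of `S*`. -/
def MaxDiversity (I : Inst) (A : Finset I.S) : Prop :=
  ∃ M, RankMaximal I M ∧ covered I M ⊆ A

/-- Balanced representation of a chosen set: some matching in `𝕄` attaining
balanced representation covers all of `S*`. -/
def BalancedRepSet (I : Inst) (A : Finset I.S) : Prop :=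
  ∃ M, BalancedRep I M ∧ A ⊆ covered I M

/-- Justified envy-freeness: no `s ∉ S*`, `s' ∈ S*` with `s ≻ s'` such that
`(S* ∪ {s}) \ {s'}` satisfies both maximal diversity and balanced representation. -/
def JEF (I : Inst) (A : Finset I.S) : Prop :=
  ¬ ∃ s s', s ∉ A ∧ s' ∈ A ∧ I.prio s s' ∧
    MaxDiversity I (insert s A \ {s'}) ∧ BalancedRepSet I (insert s A \ {s'})

/-- `I` is valid w.r.t. a target vector `δ`: some rank-maximal matching of size at
most `q` has `|M_u| ≥ δ_u` for every group `u ∈ U`. -/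
def ValidWrt (I : Inst) (δ : Finset I.T → ℕ) : Prop :=
  ∃ M, RankMaximal I M ∧ ∀ u ∈ groups I, δ u ≤ Mu I M u

/-- The max-min ratio `α(I)`: the maximum over rank-maximal matchings `M` of
size at most `q` of `min_{u∈U} |M_u|/|S_u|`. -/
noncomputable def alphaQ (I : Inst) : ℚ :=
  let cands : Finset ℚ :=
    ((Finset.Icc 0 (Fintype.card I.S)) ×ˢ groups I).image
      (fun p => (p.1 : ℚ) / ((Su I p.2).card : ℚ))
  ((cands.filter
      (fun x : ℚ => ∃ M, RankMaximal I M ∧ minRatio I M = (x : WithTop ℚ))).max).unbotD 0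

/-- The crucial vector `δ*` : `δ*_u = ⌊α(I)·|S_u|⌋`. -/
noncomputable def deltaStar (I : Inst) (u : Finset I.T) : ℕ :=
  ⌊alphaQ I * ((Su I u).card : ℚ)⌋₊

/-- The `k` highest-priority students of `A`. -/
def topK (I : Inst) (A : Finset I.S) (k : ℕ) : Finset I.S :=
  A.filter (fun s => (A.filter (fun s' => s ≤ s')).card ≤ k)

/-! ### The flow network -/

/-- Nodes of the flow network: `Sum.inl 0` = source `a`, `Sum.inl 1` = sink `b`,
`Sum.inl 2` = the capacity node `Q`; group nodes, type nodes (`none` = `t₀`),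
and rank nodes `t^i` (rank value `i+1` for `i : Fin r`). -/
abbrev Node (I : Inst) := Fin 3 ⊕ Finset I.T ⊕ Option I.T ⊕ (Option I.T × Fin I.r)

def nSrc (I : Inst) : Node I := Sum.inl 0
def nSink (I : Inst) : Node I := Sum.inl 1
def nQ (I : Inst) : Node I := Sum.inl 2
def nGrp (I : Inst) (u : Finset I.T) : Node I := Sum.inr (Sum.inl u)
def nTyp (I : Inst) (t : Option I.T) : Node I := Sum.inr (Sum.inr (Sum.inl t))
def nRnk (I : Inst) (t : Option I.T) (i : Fin I.r) : Node I :=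
  Sum.inr (Sum.inr (Sum.inr (t, i)))

/-- Quotas including the general type: `η_{t₀}^r = q` and `η_{t₀}^j = 0` for `j < r`. -/
def ηgen (I : Inst) (t : Option I.T) (j : ℕ) : ℕ :=
  match t with
  | some t => I.η t j
  | none => if j = I.r then I.q else 0

/-- Capacities of the flow network (capacity `0` = no edge). -/
def cap (I : Inst) : Node I → Node I → ℕ := fun x y =>
  match x, y with
  | Sum.inl a, Sum.inl b => if a = 2 ∧ b = 1 then I.q else 0
  | Sum.inl a, Sum.inr (Sum.inl u) => if a = 0 then (Su I u).card else 0
  | Sum.inr (Sum.inl u), Sum.inr (Sum.inr (Sum.inl (some t))) =>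
      ((Su I u).filter (fun s => t ∈ I.τ s)).card
  | Sum.inr (Sum.inl u), Sum.inr (Sum.inr (Sum.inl none)) => (Su I u).card
  | Sum.inr (Sum.inr (Sum.inl t)), Sum.inr (Sum.inr (Sum.inr (t', i))) =>
      if t = t' then ηgen I t' ((i : ℕ) + 1) else 0
  | Sum.inr (Sum.inr (Sum.inr (t, i))), Sum.inl a =>
      if a = 2 then ηgen I t ((i : ℕ) + 1) else 0
  | _, _ => 0

/-- Costs of the flow network: the edge `t → t^i` has cost equal to the rank
`i+1`; all other edges have cost `0`. -/
def cost (I : Inst) : Node I → Node I → ℕ := fun x y =>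
  match x, y with
  | Sum.inr (Sum.inr (Sum.inl t)), Sum.inr (Sum.inr (Sum.inr (t', i))) =>
      if t = t' then (i : ℕ) + 1 else 0
  | _, _ => 0

/-- A flow: nonnegative, within capacities, and conserved at every node other
than the source and the sink. -/
def IsFlow (I : Inst) (f : Node I → Node I → ℝ) : Prop :=
  (∀ x y, 0 ≤ f x y) ∧ (∀ x y, f x y ≤ (cap I x y : ℝ)) ∧
  (∀ x : Node I, x ≠ nSrc I → x ≠ nSink I → (∑ y, f y x) = ∑ y, f x y)

/-- The value of a flow: `Σ_u f(a, u)`. -/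
noncomputable def flowVal (I : Inst) (f : Node I → Node I → ℝ) : ℝ :=
  ∑ u : Finset I.T, f (nSrc I) (nGrp I u)

/-- The cost of a flow: `Σ_e cost(e) · f(e)`. -/
noncomputable def flowCost (I : Inst) (f : Node I → Node I → ℝ) : ℝ :=
  ∑ x : Node I, ∑ y : Node I, (cost I x y : ℝ) * f x y

/-- A maximum flow. -/
def IsMaxFlow (I : Inst) (f : Node I → Node I → ℝ) : Prop :=
  IsFlow I f ∧ ∀ g, IsFlow I g → flowVal I g ≤ flowVal I f

/-- A minimum-cost maximum flow. -/
def IsMinCostMaxFlow (I : Inst) (f : Node I → Node I → ℝ) : Prop :=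
  IsMaxFlow I f ∧ ∀ g, IsMaxFlow I g → flowCost I f ≤ flowCost I g

/-- The flow `f_M` induced by a matching `M`. -/
noncomputable def inducedFlow (I : Inst) (M : Finset (I.S × SeatT I)) :
    Node I → Node I → ℝ := fun x y =>
  match x, y with
  | Sum.inl a, Sum.inl b => if a = 2 ∧ b = 1 then (M.card : ℝ) else 0
  | Sum.inl a, Sum.inr (Sum.inl u) => if a = 0 then (Mu I M u : ℝ) else 0
  | Sum.inr (Sum.inl u), Sum.inr (Sum.inr (Sum.inl t)) =>
      ((M.filter (fun e => I.τ e.1 = u ∧ seatType I e.2 = t)).card : ℝ)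
  | Sum.inr (Sum.inr (Sum.inl t)), Sum.inr (Sum.inr (Sum.inr (t', i))) =>
      if t = t' then
        ((M.filter (fun e => seatType I e.2 = t ∧ seatRank I e.2 = (i : ℕ) + 1)).card : ℝ)
      else 0
  | Sum.inr (Sum.inr (Sum.inr (t, i))), Sum.inl a =>
      if a = 2 then
        ((M.filter (fun e => seatType I e.2 = t ∧ seatRank I e.2 = (i : ℕ) + 1)).card : ℝ)
      else 0
  | _, _ => 0

/-! ### Alternating and augmenting paths -/

/-- The edge set of a path encoded by its list of students `a₀,…` and list of
seats `v₀,…` (edges `(aₖ, vₖ)` and `(aₖ₊₁, vₖ)`). -/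
def edgesOf (I : Inst) (students : List I.S) (seats : List (SeatT I)) :
    Finset (I.S × SeatT I) :=
  (students.zip seats).toFinset ∪ (students.tail.zip seats).toFinset

/-- Symmetric difference `M ⊕ P = (M \ P) ∪ (P \ M)`. -/
def symmDiffM (I : Inst) (M P : Finset (I.S × SeatT I)) : Finset (I.S × SeatT I) :=
  (M \ P) ∪ (P \ M)

/-- An alternating path w.r.t. `M` from an uncovered student to a covered student:
students `a₀, …, aₙ` and seats `v₀, …, vₙ₋₁`, with `(aₖ, vₖ) ∉ M` edges of `G`
and `(aₖ₊₁, vₖ) ∈ M`. -/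
structure AltPath (I : Inst) (M : Finset (I.S × SeatT I)) where
  students : List I.S
  seats : List (SeatT I)
  len : students.length = seats.length + 1
  nodupS : students.Nodup
  nodupV : seats.Nodup
  notM : ∀ e ∈ students.zip seats, e ∉ M ∧ SeatValid I e.2 ∧ EdgeOK I e.1 e.2
  inM : ∀ e ∈ students.tail.zip seats, e ∈ M

/-- The edge set of an alternating path. -/
def AltPath.edges {I : Inst} {M : Finset (I.S × SeatT I)} (P : AltPath I M) :
    Finset (I.S × SeatT I) :=
  edgesOf I P.students P.seats

/-- An augmenting path w.r.t. `M` from an uncovered student to an uncovered seat: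
students `a₀, …, aₙ` and seats `v₀, …, vₙ`, with `(aₖ, vₖ) ∉ M` edges of `G`
and `(aₖ₊₁, vₖ) ∈ M`. -/
structure AugPath (I : Inst) (M : Finset (I.S × SeatT I)) where
  students : List I.S
  seats : List (SeatT I)
  len : students.length = seats.length
  nodupS : students.Nodup
  nodupV : seats.Nodup
  notM : ∀ e ∈ students.zip seats, e ∉ M ∧ SeatValid I e.2 ∧ EdgeOK I e.1 e.2
  inM : ∀ e ∈ students.tail.zip seats, e ∈ M

/-- The edge set of an augmenting path. -/
def AugPath.edges {I : Inst} {M : Finset (I.S × SeatT I)} (P : AugPath I M) :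
    Finset (I.S × SeatT I) :=
  edgesOf I P.students P.seats

/-- The instance obtained from `I` by restricting the student set to `X`. -/
@[reducible] def restrict (I : Inst) (X : Finset I.S) : Inst :=
  { S := {s : I.S // s ∈ X}
    T := I.T
    fS := inferInstance
    dS := inferInstance
    lS := inferInstance
    fT := I.fT
    dT := I.dT
    q := I.q
    qpos := I.qpos
    r := I.r
    τ := fun s => I.τ s.1
    η := I.η }

/-!
Flipping `P` trades its matched edges `(aᵢ₊₁, vᵢ)` for its unmatched edges `(aᵢ, vᵢ)`. The
unmatched edges cover the students of the matched ones plus `s`, and their seats plus `v`; as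
`s` and `v` are free, the flip is a matching with one more edge, one more covered student `s` and
one more edge of rank `k`. The edge `(s', v')` lies off the path, so it survives the flip, and
removing it gives back exactly that edge, student and rank.
-/

namespace List

variable {α β : Type*}

theorem injOn_fst_zip [DecidableEq α] [DecidableEq β] :
    ∀ {l₁ : List α} {l₂ : List β}, l₁.Nodup →
      Set.InjOn Prod.fst ((l₁.zip l₂).toFinset : Set (α × β))
  | [], _, _ => by simp
  | _ :: _, [], _ => by simp
  | a :: l₁, b :: l₂, h => by
    rw [nodup_cons] at h
    have ih := injOn_fst_zip (l₂ := l₂) h.2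
    rintro ⟨x₁, x₂⟩ hx ⟨y₁, y₂⟩ hy (hxy : x₁ = y₁)
    simp only [zip_cons_cons, toFinset_cons, Finset.coe_insert, Set.mem_insert_iff,
      Prod.mk.injEq] at hx hy
    rcases hx with ⟨rfl, rfl⟩ | hx <;> rcases hy with ⟨rfl, rfl⟩ | hy
    · rfl
    · exact absurd (hxy ▸ (of_mem_zip (mem_toFinset.1 hy)).1) h.1
    · exact absurd (hxy ▸ (of_mem_zip (mem_toFinset.1 hx)).1) h.1
    · exact ih hx hy hxy

theorem injOn_snd_zip [DecidableEq α] [DecidableEq β] {l₁ : List α} {l₂ : List β}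
    (h : l₂.Nodup) : Set.InjOn Prod.snd ((l₁.zip l₂).toFinset : Set (α × β)) := by
  rintro x hx y hy hxy
  have hswap : ∀ {z : α × β}, z ∈ (l₁.zip l₂).toFinset → z.swap ∈ (l₂.zip l₁).toFinset :=
    fun hz => by
      rw [mem_toFinset, ← zip_swap]
      exact mem_map_of_mem (mem_toFinset.1 hz)
  exact Prod.swap_injective (injOn_fst_zip h (hswap hx) (hswap hy) hxy)

theorem image_fst_zip_toFinset [DecidableEq α] [DecidableEq β] {l₁ : List α} {l₂ : List β}
    (h : l₁.length ≤ l₂.length) : (l₁.zip l₂).toFinset.image Prod.fst = l₁.toFinset := by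
  conv_rhs => rw [← List.map_fst_zip h]
  ext; simp

theorem image_snd_zip_toFinset [DecidableEq α] [DecidableEq β] {l₁ : List α} {l₂ : List β}
    (h : l₂.length ≤ l₁.length) : (l₁.zip l₂).toFinset.image Prod.snd = l₂.toFinset := by
  conv_rhs => rw [← List.map_snd_zip h]
  ext; simp

end List

theorem Finset.card_filter_insert_of_notMem {α : Type*} [DecidableEq α] {s : Finset α} {a : α}
    (p : α → Prop) [DecidablePred p] (ha : a ∉ s) :
    ((insert a s).filter p).card = (s.filter p).card + if p a then 1 else 0 := by
  rw [filter_insert]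
  split_ifs
  · exact card_insert_of_notMem fun h => ha (mem_filter.1 h).1
  · rfl

theorem Finset.injOn_union_of_disjoint_image {α β : Type*} [DecidableEq α] [DecidableEq β]
    {s t : Finset α} {f : α → β} (hs : Set.InjOn f ↑s) (ht : Set.InjOn f ↑t)
    (h : Disjoint (s.image f) (t.image f)) : Set.InjOn f ↑(s ∪ t) := by
  rw [coe_union, Set.injOn_union (disjoint_coe.2 h.of_image_finset)]
  exact ⟨hs, ht, fun x hx y hy hxy =>
    disjoint_left.1 h (mem_image_of_mem f hx) (hxy ▸ mem_image_of_mem f hy)⟩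

open Finset

variable {I : Inst}

theorem IsMatching.injOn_fst {M : Finset (I.S × SeatT I)} (hM : IsMatching I M) :
    Set.InjOn Prod.fst (M : Set (I.S × SeatT I)) :=
  hM.2.1

theorem IsMatching.injOn_snd {M : Finset (I.S × SeatT I)} (hM : IsMatching I M) :
    Set.InjOn Prod.snd (M : Set (I.S × SeatT I)) :=
  hM.2.2

theorem IsMatching.mono {M N : Finset (I.S × SeatT I)} (hM : IsMatching I M) (h : N ⊆ M) :
    IsMatching I N :=
  ⟨fun e he => hM.1 e (h he), hM.injOn_fst.mono (coe_subset.2 h),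
    hM.injOn_snd.mono (coe_subset.2 h)⟩

theorem IsMatching.union {M N : Finset (I.S × SeatT I)} (hM : IsMatching I M)
    (hN : IsMatching I N) (hfst : Disjoint (M.image Prod.fst) (N.image Prod.fst))
    (hsnd : Disjoint (M.image Prod.snd) (N.image Prod.snd)) : IsMatching I (M ∪ N) := by
  refine ⟨fun e he => ?_, injOn_union_of_disjoint_image hM.injOn_fst hN.injOn_fst hfst,
    injOn_union_of_disjoint_image hM.injOn_snd hN.injOn_snd hsnd⟩
  rcases mem_union.1 he with he | he
  exacts [hM.1 e he, hN.1 e he]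

theorem sig_union {M N : Finset (I.S × SeatT I)} (h : Disjoint M N) (i : ℕ) :
    sig I (M ∪ N) i = sig I M i + sig I N i := by
  rw [sig, filter_union, card_union_of_disjoint (disjoint_filter_filter h), sig, sig]

theorem sig_insert {M : Finset (I.S × SeatT I)} {e : I.S × SeatT I} (he : e ∉ M) (i : ℕ) :
    sig I (insert e M) i = sig I M i + if seatRank I e.2 = i then 1 else 0 :=
  card_filter_insert_of_notMem _ he

theorem sig_eq_card_filter_image_snd {M : Finset (I.S × SeatT I)}
    (hM : Set.InjOn Prod.snd (M : Set (I.S × SeatT I))) (i : ℕ) :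
    sig I M i = ((M.image Prod.snd).filter (fun v => seatRank I v = i)).card := by
  rw [filter_image, card_image_of_injOn (hM.mono (coe_subset.2 (filter_subset _ _))), sig]

theorem sigLT_of_sig_eq {M N M' : Finset (I.S × SeatT I)} (hsig : ∀ i, sig I N i = sig I M i)
    (h : SigLT I N M') : SigLT I M M' := by
  obtain ⟨k, hk1, hkr, heq, hlt⟩ := h
  exact ⟨k, hk1, hkr, fun i hi1 hik => hsig i ▸ heq i hi1 hik, hsig k ▸ hlt⟩

theorem RankMaximal.of_sig_eq {M N : Finset (I.S × SeatT I)} (hM : RankMaximal I M)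
    (hN : IsMatching I N) (hcard : N.card = M.card) (hsig : ∀ i, sig I N i = sig I M i) :
    RankMaximal I N :=
  ⟨hN, hcard ▸ hM.2.1, fun M' hM' hq h => hM.2.2 M' hM' hq (sigLT_of_sig_eq hsig h)⟩

theorem covered_sdiff_singleton {M : Finset (I.S × SeatT I)} {e : I.S × SeatT I}
    (hM : IsMatching I M) (he : e ∈ M) : covered I (M \ {e}) = covered I M \ {e.1} := by
  rw [covered, image_sdiff_of_injOn hM.injOn_fst (singleton_subset_iff.2 he), image_singleton]
  rfl

section Swap

variable {M A B : Finset (I.S × SeatT I)} {s : I.S} {v : SeatT I}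

theorem isMatching_sdiff_union (hM : IsMatching I M) (hA : IsMatching I A) (hB : B ⊆ M)
    (hAfst : A.image Prod.fst = insert s (B.image Prod.fst))
    (hAsnd : A.image Prod.snd = insert v (B.image Prod.snd))
    (hs : s ∉ covered I M) (hv : v ∉ M.image Prod.snd) : IsMatching I (M \ B ∪ A) := by
  refine (hM.mono sdiff_subset).union hA ?_ ?_
  · rw [image_sdiff_of_injOn hM.injOn_fst hB, hAfst, disjoint_insert_right]
    exact ⟨fun h => hs (mem_sdiff.1 h).1, sdiff_disjoint⟩
  · rw [image_sdiff_of_injOn hM.injOn_snd hB, hAsnd, disjoint_insert_right]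
    exact ⟨fun h => hv (mem_sdiff.1 h).1, sdiff_disjoint⟩

theorem card_sdiff_union (hM : IsMatching I M) (hA : Set.InjOn Prod.snd (A : Set (I.S × SeatT I)))
    (hAM : Disjoint A M) (hB : B ⊆ M) (hAsnd : A.image Prod.snd = insert v (B.image Prod.snd))
    (hv : v ∉ M.image Prod.snd) : (M \ B ∪ A).card = M.card + 1 := by
  have hcardA : A.card = B.card + 1 := by
    rw [← card_image_of_injOn hA, hAsnd,
      card_insert_of_notMem fun h => hv (image_subset_image hB h),
      card_image_of_injOn (hM.injOn_snd.mono (coe_subset.2 hB))]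
  rw [card_union_of_disjoint (hAM.symm.mono_left sdiff_subset), card_sdiff_of_subset hB, hcardA]
  have := card_le_card hB
  omega

theorem sig_sdiff_union (hM : IsMatching I M) (hA : Set.InjOn Prod.snd (A : Set (I.S × SeatT I)))
    (hAM : Disjoint A M) (hB : B ⊆ M) (hAsnd : A.image Prod.snd = insert v (B.image Prod.snd))
    (hv : v ∉ M.image Prod.snd) (i : ℕ) :
    sig I (M \ B ∪ A) i = sig I M i + if seatRank I v = i then 1 else 0 := by
  have hsigA : sig I A i = sig I B i + if seatRank I v = i then 1 else 0 := by
    rw [sig_eq_card_filter_image_snd hA, hAsnd,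
      card_filter_insert_of_notMem _ fun h => hv (image_subset_image hB h),
      sig_eq_card_filter_image_snd (hM.injOn_snd.mono (coe_subset.2 hB))]
  conv_rhs => rw [← sdiff_union_of_subset hB, sig_union sdiff_disjoint]
  rw [sig_union (hAM.symm.mono_left sdiff_subset), hsigA, add_assoc]

theorem covered_sdiff_union (hM : IsMatching I M) (hB : B ⊆ M)
    (hAfst : A.image Prod.fst = insert s (B.image Prod.fst)) :
    covered I (M \ B ∪ A) = insert s (covered I M) := by
  have hBM : B.image Prod.fst ⊆ covered I M := image_subset_image hB
  rw [covered, image_union, image_sdiff_of_injOn hM.injOn_fst hB, hAfst]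
  ext x
  have := @hBM x
  simp only [covered, mem_union, mem_sdiff, mem_insert] at this ⊢
  tauto

end Swap

namespace AugPath

variable {M : Finset (I.S × SeatT I)} (P : AugPath I M)

def unmatchedEdges : Finset (I.S × SeatT I) := (P.students.zip P.seats).toFinset

def matchedEdges : Finset (I.S × SeatT I) := (P.students.tail.zip P.seats).toFinset

theorem edges_eq_union : P.edges = P.unmatchedEdges ∪ P.matchedEdges := rfl

theorem matchedEdges_subset : P.matchedEdges ⊆ M :=
  fun e he => P.inM e (List.mem_toFinset.1 he)

theorem disjoint_unmatchedEdges : Disjoint P.unmatchedEdges M :=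
  disjoint_left.2 fun e he => (P.notM e (List.mem_toFinset.1 he)).1

theorem isMatching_unmatchedEdges : IsMatching I P.unmatchedEdges :=
  ⟨fun e he => (P.notM e (List.mem_toFinset.1 he)).2, List.injOn_fst_zip P.nodupS,
    List.injOn_snd_zip P.nodupV⟩

theorem fst_mem_students_of_mem_matchedEdges {e : I.S × SeatT I} (he : e ∈ P.matchedEdges) :
    e.1 ∈ P.students :=
  List.mem_of_mem_tail (List.of_mem_zip (List.mem_toFinset.1 he)).1

theorem image_fst_unmatchedEdges {s : I.S} (hs : P.students.head? = some s) :
    P.unmatchedEdges.image Prod.fst = insert s (P.matchedEdges.image Prod.fst) := by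
  obtain ⟨as, has⟩ := List.head?_eq_some_iff.1 hs
  have hlen := P.len
  rw [unmatchedEdges, matchedEdges, List.image_fst_zip_toFinset hlen.le,
    List.image_fst_zip_toFinset (by rw [List.length_tail]; omega), has]
  simp

theorem image_snd_unmatchedEdges {v : SeatT I} (hv : P.seats.getLast? = some v) :
    P.unmatchedEdges.image Prod.snd = insert v (P.matchedEdges.image Prod.snd) := by
  obtain ⟨vs, hvs⟩ := List.getLast?_eq_some_iff.1 hv
  have hlen := P.len
  have htail : P.students.tail.length = vs.length := by
    rw [hvs] at hlen; simp [hlen]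
  rw [unmatchedEdges, matchedEdges, List.image_snd_zip_toFinset hlen.ge, hvs,
    ← List.append_nil P.students.tail, List.zip_append htail, List.zip_nil_left, List.append_nil,
    List.image_snd_zip_toFinset htail.ge]
  simp [List.toFinset_append]

theorem symmDiffM_edges : symmDiffM I M P.edges = M \ P.matchedEdges ∪ P.unmatchedEdges := by
  have hA := disjoint_left.1 P.disjoint_unmatchedEdges
  have hB := @P.matchedEdges_subset
  ext e
  have := @hA e
  have := @hB e
  simp only [symmDiffM, edges_eq_union, mem_union, mem_sdiff] at *
  tauto

end AugPath

theorem augPath_flip_general (I : Inst) (M : Finset (I.S × SeatT I)) (hM : IsMatching I M)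
    (P : AugPath I M) (s s' : I.S) (v v' : SeatT I) (k : ℕ)
    (hhead : P.students.head? = some s) (hs : s ∉ covered I M)
    (hlast : P.seats.getLast? = some v) (hv : ∀ e ∈ M, e.2 ≠ v)
    (hrk : seatRank I v = k)
    (hs'P : s' ∉ P.students)
    (hs'v' : (s', v') ∈ M) (hrk' : seatRank I v' = k) :
    IsMatching I (symmDiffM I M P.edges \ {(s', v')}) ∧
    (symmDiffM I M P.edges \ {(s', v')}).card = M.card ∧
    (∀ i, sig I (symmDiffM I M P.edges \ {(s', v')}) i = sig I M i) ∧
    covered I (symmDiffM I M P.edges \ {(s', v')}) = insert s (covered I M) \ {s'} ∧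
    (RankMaximal I M → RankMaximal I (symmDiffM I M P.edges \ {(s', v')})) := by
  have hvM : v ∉ M.image Prod.snd := fun h => by
    obtain ⟨e, he, rfl⟩ := mem_image.1 h
    exact hv e he rfl
  have hA := P.isMatching_unmatchedEdges
  have hAfst := P.image_fst_unmatchedEdges hhead
  have hAsnd := P.image_snd_unmatchedEdges hlast
  have hB := P.matchedEdges_subset
  have hAM := P.disjoint_unmatchedEdges
  rw [P.symmDiffM_edges]
  set N := M \ P.matchedEdges ∪ P.unmatchedEdges
  have hN : IsMatching I N := isMatching_sdiff_union hM hA hB hAfst hAsnd hs hvM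
  have he : (s', v') ∈ N :=
    mem_union_left _ (mem_sdiff.2 ⟨hs'v', fun h => hs'P (P.fst_mem_students_of_mem_matchedEdges h)⟩)
  have hmatch : IsMatching I (N \ {(s', v')}) := hN.mono sdiff_subset
  have hcard : (N \ {(s', v')}).card = M.card := by
    rw [card_sdiff_of_subset (singleton_subset_iff.2 he),
      card_sdiff_union hM hA.injOn_snd hAM hB hAsnd hvM, card_singleton, Nat.add_sub_cancel]
  have hsig : ∀ i, sig I (N \ {(s', v')}) i = sig I M i := by
    intro i
    have h : sig I N i = sig I M i + if seatRank I v = i then 1 else 0 :=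
      sig_sdiff_union hM hA.injOn_snd hAM hB hAsnd hvM i
    rw [← insert_erase he, sig_insert (notMem_erase _ _), hrk, hrk'] at h
    rw [sdiff_singleton_eq_erase]
    omega
  refine ⟨hmatch, hcard, hsig, ?_, fun hmax => hmax.of_sig_eq hmatch hcard hsig⟩
  rw [covered_sdiff_singleton hN he, covered_sdiff_union hM hB hAfst]

/-- flipping an augmenting path from an uncovered student `s` to an
uncovered seat `v` of rank `k` and removing an `M`-edge `(s', v')` of rank `k`
(with `s'` covered and not on the path) yields a matching `M*` of the same size
and signature covering `(S_M ∪ {s}) \ {s'}`; rank-maximality is preserved. -/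
theorem augPath_flip (I : Inst) (M : Finset (I.S × SeatT I)) (hM : IsMatching I M)
    (P : AugPath I M) (s s' : I.S) (v v' : SeatT I) (k : ℕ)
    (hPne : P.students ≠ [])
    (hhead : P.students.head? = some s) (hs : s ∉ covered I M)
    (hlast : P.seats.getLast? = some v) (hv : ∀ e ∈ M, e.2 ≠ v)
    (hrk : seatRank I v = k)
    (hs'cov : s' ∈ covered I M) (hs'P : s' ∉ P.students)
    (hs'v' : (s', v') ∈ M) (hrk' : seatRank I v' = k) :
    IsMatching I (symmDiffM I M P.edges \ {(s', v')}) ∧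
    (symmDiffM I M P.edges \ {(s', v')}).card = M.card ∧
    (∀ i, sig I (symmDiffM I M P.edges \ {(s', v')}) i = sig I M i) ∧
    covered I (symmDiffM I M P.edges \ {(s', v')}) = insert s (covered I M) \ {s'} ∧
    (RankMaximal I M → RankMaximal I (symmDiffM I M P.edges \ {(s', v')})) :=
  augPath_flip_general I M hM P s s' v v' k hhead hs hlast hv hrk hs'P hs'v' hrk'
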